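/- There is no regular 4-simplex with vertices in ℚ⁴: no five points of ℚ⁴ are pairwise equidistant (with respect to Euclidean distance) and affinely independent. -/

import Mathlib

/-!
The edge vectors `wᵢ = vᵢ₊₁ - v₀` of a regular `n`-simplex with squared edge length `m` satisfy
`2 ⟪wᵢ, wⱼ⟫ = m (1 + δᵢⱼ)` by polarization, so twice their Gram matrix is `m (I + J)`, whose
determinant is `mⁿ (n + 1)`. In `ℚⁿ` the Gram matrix is `WᵀW` for the square matrix `W` of edge
vectors, hence `2ⁿ det(W)² = mⁿ (n + 1)`; for even `n` this makes `n + 1` a rational square, and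
`5` is not one.
-/

/-- A regular `d`-simplex in `ℚⁿ` of squared edge length `m`. -/
def IsRegularSimplex (d n : ℕ) (m : ℚ) (v : Fin (d + 1) → Fin n → ℚ) : Prop :=
  AffineIndependent ℚ v ∧ ∀ i j, i ≠ j → ∑ k, (v i k - v j k) ^ 2 = m

open Matrix

section Gram

variable {K : Type*} [CommRing K]

def edgeMatrix {d n : ℕ} (v : Fin (d + 1) → Fin n → K) : Matrix (Fin n) (Fin d) K :=
  Matrix.of fun k i => v i.succ k - v 0 k

theorem two_smul_gram_edgeMatrix {d n : ℕ} {v : Fin (d + 1) → Fin n → K} {m : K}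
    (hv : ∀ i j, i ≠ j → ∑ k, (v i k - v j k) ^ 2 = m) :
    (2 : K) • ((edgeMatrix v)ᵀ * edgeMatrix v) = m • (1 + vecMulVec (1 : Fin d → K) 1) := by
  ext i j
  have hi := hv i.succ 0 i.succ_ne_zero
  simp only [Matrix.smul_apply, Matrix.add_apply, mul_apply, transpose_apply, edgeMatrix,
    of_apply, vecMulVec_apply, one_apply, smul_eq_mul, Pi.one_apply, mul_one]
  rcases eq_or_ne i j with rfl | hij
  · rw [if_pos rfl, ← hi]
    simp only [sq]
    ring
  · have hj := hv j.succ 0 j.succ_ne_zero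
    have hij' := hv i.succ j.succ (Fin.succ_injective _ |>.ne hij)
    have polarization : 2 * ∑ k, (v i.succ k - v 0 k) * (v j.succ k - v 0 k) =
        ∑ k, (v i.succ k - v 0 k) ^ 2 + ∑ k, (v j.succ k - v 0 k) ^ 2 -
          ∑ k, (v i.succ k - v j.succ k) ^ 2 := by
      rw [Finset.mul_sum, ← Finset.sum_add_distrib, ← Finset.sum_sub_distrib]
      exact Finset.sum_congr rfl fun k _ => by ring
    rw [if_neg hij, zero_add, mul_one, polarization, hi, hj, hij', add_sub_cancel_right]

theorem det_one_add_vecMulVec_one_one {ι : Type*} [Fintype ι] [DecidableEq ι] :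
    det (1 + vecMulVec (1 : ι → K) 1) = (Fintype.card ι : K) + 1 := by
  rw [vecMulVec_eq Unit, det_one_add_replicateCol_mul_replicateRow, add_comm]
  simp

theorem two_pow_mul_det_edgeMatrix_sq {n : ℕ} {v : Fin (n + 1) → Fin n → K} {m : K}
    (hv : ∀ i j, i ≠ j → ∑ k, (v i k - v j k) ^ 2 = m) :
    2 ^ n * det (edgeMatrix v) ^ 2 = m ^ n * (n + 1) := by
  have h := congrArg det (two_smul_gram_edgeMatrix hv)
  rwa [det_smul, det_smul, det_mul, det_transpose, det_one_add_vecMulVec_one_one,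
    Fintype.card_fin, ← sq] at h

end Gram

namespace IsRegularSimplex

theorem sqEdgeLength_ne_zero {d n : ℕ} {m : ℚ} {v : Fin (d + 1) → Fin n → ℚ}
    (h : IsRegularSimplex d n m v) (hd : d ≠ 0) : m ≠ 0 := by
  rintro rfl
  have hne : (0 : Fin (d + 1)) ≠ Fin.last d := by
    rw [Ne, Fin.ext_iff]
    exact hd.symm
  have hsum := h.2 0 (Fin.last d) hne
  simp only [sq, Finset.sum_mul_self_eq_zero_iff, Finset.mem_univ, true_implies, sub_eq_zero]
    at hsum
  exact h.1.injective.ne hne (funext hsum)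

theorem isSquare_succ {n : ℕ} {m : ℚ} {v : Fin (n + 1) → Fin n → ℚ}
    (h : IsRegularSimplex n n m v) (hn : Even n) : IsSquare ((n : ℚ) + 1) := by
  rcases eq_or_ne n 0 with rfl | hn0
  · norm_num
  have hm := h.sqEdgeLength_ne_zero hn0
  have hdet := two_pow_mul_det_edgeMatrix_sq h.2
  obtain ⟨k, rfl⟩ := hn
  refine ⟨det (edgeMatrix v) * (2 / m) ^ k, ?_⟩
  rw [div_pow]
  field_simp
  linear_combination -hdet

end IsRegularSimplex

/-- There is no regular `4`-simplex with vertices in `ℚ⁴`. -/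
theorem no_regular_four_simplex_in_Q4 :
    ¬ ∃ (v : Fin 5 → Fin 4 → ℚ) (m : ℚ),
        AffineIndependent ℚ v ∧ ∀ i j, i ≠ j → ∑ k, (v i k - v j k) ^ 2 = m := by
  rintro ⟨v, m, hv⟩
  have h := IsRegularSimplex.isSquare_succ (n := 4) hv (by decide)
  norm_num at h
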